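/- Pinching inequality: Let P be an orthogonal projector and A any linear operator on a finite-dimensional inner product space. Then S(PAP + (I−P)A(I−P)) ≺_w S(A) and S(PAP − (I−P)A(I−P)) ≺_w S(A). -/

import Mathlib

/-
With `W = 2P - 1`, which is a self-adjoint unitary, `PAP + (1-P)A(1-P) = (A + WAW)/2` and
`PAP - (1-P)A(1-P) = (WA + AW)/2`. By Ky Fan's maximum principle, the sum of the `k` largest
singular values of `M` is the maximum of `Re tr (U* M V)` over isometries `U`, `V` with `k` columns:
writing `M = X Σ Y*` (singular value decomposition), `Re tr (U* M V) = ∑ sᵢ cᵢ` with weights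
`cᵢ ∈ [0, 1]` summing to `k`, and the maximum is attained on the leading singular vectors.
Evaluating this maximum at an average of two unitary conjugates of `A` gives the partial-sum
inequalities, hence the weak majorizations.
-/

open Finset

/-- `s` is the listing, in nonincreasing order, of the singular values of `A`. -/
def IsSingListDesc {n : ℕ} (A : Matrix (Fin n) (Fin n) ℂ) (s : Fin n → ℝ) : Prop :=
  Antitone s ∧ ∃ σ : Equiv.Perm (Fin n),
    s = (fun i => Real.sqrt ((Matrix.isHermitian_conjTranspose_mul_self A).eigenvalues i)) ∘ σ

/-- Weak majorization `x ≺_w y`, with `y` in nonincreasing order. -/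
def WeakMajDesc {m n : ℕ} (x : Fin m → ℝ) (y : Fin n → ℝ) : Prop :=
  ∀ t : Finset (Fin m),
    ∑ i ∈ t, x i ≤ ∑ i ∈ univ.filter (fun j : Fin n => (j : ℕ) < t.card), y i

def prefixSum {n : ℕ} (s : Fin n → ℝ) (k : ℕ) : ℝ :=
  ∑ i ∈ univ.filter (fun j : Fin n => (j : ℕ) < k), s i

theorem sum_mul_le_prefixSum {n : ℕ} {s c : Fin n → ℝ} (hs : Antitone s) (hs₀ : ∀ i, 0 ≤ s i)
    (hc₀ : ∀ i, 0 ≤ c i) (hc₁ : ∀ i, c i ≤ 1) {k : ℕ} (hck : ∑ i, c i ≤ k) :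
    ∑ i, s i * c i ≤ prefixSum s k := by
  set F := univ.filter (fun j : Fin n => (j : ℕ) < k)
  -- termwise `(s i - τ) * (c i - [i < k]) ≤ 0` for the threshold `τ = s k`
  set τ : ℝ := if h : k < n then s ⟨k, h⟩ else 0
  have hτF : τ * (∑ i, c i - #F) ≤ 0 := by
    unfold τ; split_ifs with h
    · rw [Fin.card_filter_val_lt, min_eq_right h.le]
      exact mul_nonpos_of_nonneg_of_nonpos (hs₀ _) (by linarith)
    · simp
  have hterm (i : Fin n) :
      s i * c i ≤ (if i ∈ F then s i else 0) + τ * (c i - if i ∈ F then 1 else 0) := by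
    by_cases hi : i ∈ F
    · have : τ ≤ s i := by
        unfold τ; split_ifs with h
        · exact hs (Fin.le_def.2 (mem_filter.1 hi).2.le)
        · exact hs₀ i
      simp only [hi, if_true]
      nlinarith [hc₁ i]
    · have hk : k < n := by
        by_contra h
        exact hi (by simp [F]; omega)
      have : s i ≤ τ := by
        simp only [τ, hk, dif_pos]
        exact hs (Fin.le_def.2 (by simpa [F] using hi))
      simp only [hi, if_false]
      nlinarith [hc₀ i]
  calc ∑ i, s i * c i
      ≤ ∑ i, ((if i ∈ F then s i else 0) + τ * (c i - if i ∈ F then 1 else 0)) :=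
        sum_le_sum fun i _ => hterm i
    _ = prefixSum s k + τ * (∑ i, c i - #F) := by
        rw [sum_add_distrib, ← mul_sum, sum_sub_distrib, sum_ite_mem, sum_ite_mem, sum_const,
          nsmul_one, univ_inter]
        rfl
    _ ≤ prefixSum s k := by linarith

theorem sum_le_prefixSum_card {n : ℕ} {s : Fin n → ℝ} (hs : Antitone s) (hs₀ : ∀ i, 0 ≤ s i)
    (t : Finset (Fin n)) : ∑ i ∈ t, s i ≤ prefixSum s #t := by
  have := sum_mul_le_prefixSum hs hs₀ (c := fun i => if i ∈ t then 1 else 0)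
    (fun i => by split_ifs <;> norm_num) (fun i => by split_ifs <;> norm_num) (k := #t)
    (by simp)
  simpa using this

open Matrix WithLp
open scoped ComplexOrder

namespace Matrix

variable {𝕜 ι m n : Type*} [RCLike 𝕜] [Fintype ι] [Fintype m] [Fintype n]

theorem re_diag_mul_conjTranspose_self_nonneg (A : Matrix m ι 𝕜) (i : m) :
    0 ≤ RCLike.re ((A * Aᴴ) i i) :=
  (RCLike.nonneg_iff.1 (posSemidef_self_mul_conjTranspose A).diag_nonneg).1

omit [Fintype ι] in
theorem conjTranspose_mul_self_mul_eq_one [DecidableEq n] [DecidableEq ι] {W : Matrix m n 𝕜}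
    {V : Matrix n ι 𝕜} (hW : Wᴴ * W = 1) (hV : Vᴴ * V = 1) : (W * V)ᴴ * (W * V) = 1 := by
  rw [conjTranspose_mul, Matrix.mul_assoc, ← Matrix.mul_assoc Wᴴ, hW, Matrix.one_mul, hV]

theorem re_diag_mul_conjTranspose_self_le_one [DecidableEq ι] [DecidableEq m]
    {B : Matrix m ι 𝕜} (hB : Bᴴ * B = 1) (i : m) : RCLike.re ((B * Bᴴ) i i) ≤ 1 := by
  -- `1 - B Bᴴ` is an orthogonal projection, hence of the form `A Aᴴ`
  have hproj : (1 - B * Bᴴ) * (1 - B * Bᴴ)ᴴ = 1 - B * Bᴴ := by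
    have : B * Bᴴ * (B * Bᴴ) = B * Bᴴ := by
      rw [Matrix.mul_assoc, ← Matrix.mul_assoc Bᴴ, hB, Matrix.one_mul]
    rw [conjTranspose_sub, conjTranspose_one, conjTranspose_mul, conjTranspose_conjTranspose,
      Matrix.sub_mul, Matrix.mul_sub, Matrix.mul_sub, this]
    simp
  have := re_diag_mul_conjTranspose_self_nonneg (1 - B * Bᴴ) i
  rw [hproj, sub_apply, one_apply_eq, map_sub, RCLike.one_re] at this
  linarith

theorem sum_re_diag_mul_conjTranspose_self [DecidableEq ι] {B : Matrix m ι 𝕜}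
    (hB : Bᴴ * B = 1) : ∑ i, RCLike.re ((B * Bᴴ) i i) = Fintype.card ι := by
  rw [← map_sum]
  change RCLike.re (trace (B * Bᴴ)) = _
  rw [trace_mul_comm, hB, trace_one]
  simp

theorem two_mul_re_diag_mul_conjTranspose_le (D C : Matrix m ι 𝕜) (i : m) :
    2 * RCLike.re ((D * Cᴴ) i i) ≤ RCLike.re ((D * Dᴴ) i i) + RCLike.re ((C * Cᴴ) i i) := by
  have := re_diag_mul_conjTranspose_self_nonneg (D - C) i
  have hCD : RCLike.re ((C * Dᴴ) i i) = RCLike.re ((D * Cᴴ) i i) := by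
    rw [← conjTranspose_conjTranspose C, ← conjTranspose_mul, conjTranspose_apply,
      RCLike.star_def, RCLike.conj_re, conjTranspose_conjTranspose]
  rw [conjTranspose_sub, Matrix.sub_mul, Matrix.mul_sub, Matrix.mul_sub] at this
  simp only [sub_apply, map_sub] at this
  linarith

theorem exists_re_trace_le_sum_mul [DecidableEq n] [DecidableEq ι] {X Y : Matrix n n 𝕜}
    (hX : X * Xᴴ = 1) (hY : Y * Yᴴ = 1) {d : n → ℝ} (hd : ∀ i, 0 ≤ d i)
    {U V : Matrix n ι 𝕜} (hU : Uᴴ * U = 1) (hV : Vᴴ * V = 1) :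
    ∃ c : n → ℝ, (∀ i, 0 ≤ c i) ∧ (∀ i, c i ≤ 1) ∧ ∑ i, c i = Fintype.card ι ∧
      RCLike.re (trace (Uᴴ * (X * diagonal (fun i => (d i : 𝕜)) * Yᴴ) * V)) ≤ ∑ i, d i * c i := by
  set B := Xᴴ * U
  set B' := Yᴴ * V
  have hB : Bᴴ * B = 1 :=
    conjTranspose_mul_self_mul_eq_one (by rwa [conjTranspose_conjTranspose]) hU
  have hB' : B'ᴴ * B' = 1 :=
    conjTranspose_mul_self_mul_eq_one (by rwa [conjTranspose_conjTranspose]) hV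
  refine ⟨fun i => (RCLike.re ((B' * B'ᴴ) i i) + RCLike.re ((B * Bᴴ) i i)) / 2,
    fun i => ?_, fun i => ?_, ?_, ?_⟩
  · have := re_diag_mul_conjTranspose_self_nonneg B i
    have := re_diag_mul_conjTranspose_self_nonneg B' i
    positivity
  · linarith [re_diag_mul_conjTranspose_self_le_one hB i,
      re_diag_mul_conjTranspose_self_le_one hB' i]
  · rw [← sum_div, sum_add_distrib, sum_re_diag_mul_conjTranspose_self hB,
      sum_re_diag_mul_conjTranspose_self hB']
    ring
  have htrace : trace (Uᴴ * (X * diagonal (fun i => (d i : 𝕜)) * Yᴴ) * V) =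
      ∑ i, (d i : 𝕜) * (B' * Bᴴ) i i := by
    have : Uᴴ * (X * diagonal (fun i => (d i : 𝕜)) * Yᴴ) * V =
        Bᴴ * (diagonal (fun i => (d i : 𝕜)) * B') := by
      simp only [B, B', conjTranspose_mul, conjTranspose_conjTranspose, Matrix.mul_assoc]
    rw [this, trace_mul_comm, Matrix.mul_assoc]
    simp [trace, diagonal_mul]
  rw [htrace, map_sum]
  refine sum_le_sum fun i _ => ?_
  rw [RCLike.re_ofReal_mul]
  have := two_mul_re_diag_mul_conjTranspose_le B' B i
  nlinarith [hd i]

theorem inner_toLp_mulVec (M : Matrix m n 𝕜) (v w : n → 𝕜) :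
    inner 𝕜 (toLp 2 (M *ᵥ v)) (toLp 2 (M *ᵥ w)) = inner 𝕜 (toLp 2 v) (toLp 2 ((Mᴴ * M) *ᵥ w)) := by
  simp only [EuclideanSpace.inner_eq_star_dotProduct, ← mulVec_mulVec, star_mulVec]
  rw [dotProduct_comm, ← dotProduct_mulVec, dotProduct_comm]

theorem inner_mulVec_eigenvectorBasis [DecidableEq n] (M : Matrix m n 𝕜) (i j : n) :
    inner 𝕜 (toLp 2 (M *ᵥ (isHermitian_conjTranspose_mul_self M).eigenvectorBasis i))
      (toLp 2 (M *ᵥ (isHermitian_conjTranspose_mul_self M).eigenvectorBasis j)) =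
      if i = j then ((isHermitian_conjTranspose_mul_self M).eigenvalues i : 𝕜) else 0 := by
  set hH := isHermitian_conjTranspose_mul_self M
  rw [inner_toLp_mulVec, hH.mulVec_eigenvectorBasis, toLp_smul, toLp_ofLp, toLp_ofLp,
    RCLike.real_smul_eq_coe_smul (K := 𝕜), inner_smul_right,
    orthonormal_iff_ite.1 hH.eigenvectorBasis.orthonormal]
  split_ifs with h <;> simp [h]

theorem exists_orthonormalBasis_mulVec_eigenvectorBasis [DecidableEq n] (M : Matrix n n 𝕜) :
    ∃ c : OrthonormalBasis n 𝕜 (EuclideanSpace 𝕜 n), ∀ i,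
      M *ᵥ (isHermitian_conjTranspose_mul_self M).eigenvectorBasis i =
        ((√((isHermitian_conjTranspose_mul_self M).eigenvalues i) : ℝ) : 𝕜) • c i := by
  set hH := isHermitian_conjTranspose_mul_self M
  set μ := hH.eigenvalues
  have hsqrt {i : n} (hi : μ i ≠ 0) : ((√(μ i) : ℝ) : 𝕜) ≠ 0 := by
    have := (eigenvalues_conjTranspose_mul_self_nonneg M i).lt_of_ne' hi
    exact_mod_cast (Real.sqrt_pos.2 this).ne'
  -- normalize the images of the eigenvectors with nonzero eigenvalue, then complete them
  set v : n → EuclideanSpace 𝕜 n := fun i =>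
    ((√(μ i) : ℝ)⁻¹ : 𝕜) • toLp 2 (M *ᵥ hH.eigenvectorBasis i)
  have hv : Orthonormal 𝕜 ({i | μ i ≠ 0}.domRestrict v) := by
    rw [orthonormal_iff_ite]
    rintro ⟨i, hi⟩ ⟨j, hj⟩
    simp only [Set.domRestrict_apply, v, inner_smul_left, inner_smul_right,
      inner_mulVec_eigenvectorBasis, Subtype.mk.injEq]
    split_ifs with h
    · subst h
      have hμ : (μ i : 𝕜) = ((√(μ i) : ℝ) : 𝕜) * ((√(μ i) : ℝ) : 𝕜) := by
        rw [← RCLike.ofReal_mul, Real.mul_self_sqrt (eigenvalues_conjTranspose_mul_self_nonneg M i)]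
      have := hsqrt hi
      rw [map_inv₀, RCLike.conj_ofReal, hμ]
      field_simp
    · simp
  obtain ⟨c, hc⟩ := hv.exists_orthonormalBasis_extension_of_card_eq (by simp)
  refine ⟨c, fun i => ?_⟩
  by_cases hμ : μ i = 0
  · have := inner_mulVec_eigenvectorBasis M i i
    rw [if_pos rfl, show (isHermitian_conjTranspose_mul_self M).eigenvalues i = 0 from hμ,
      RCLike.ofReal_zero, inner_self_eq_zero] at this
    simpa [hμ] using congrArg ofLp this
  · rw [hc i hμ, ofLp_smul, ofLp_toLp, smul_smul, mul_inv_cancel₀ (hsqrt hμ), one_smul]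

theorem exists_svd [DecidableEq n] (M : Matrix n n 𝕜) :
    ∃ X ∈ unitaryGroup n 𝕜, ∃ Y ∈ unitaryGroup n 𝕜, M = X *
      diagonal (fun i => ((√((isHermitian_conjTranspose_mul_self M).eigenvalues i) : ℝ) : 𝕜)) *
        Yᴴ := by
  set hH := isHermitian_conjTranspose_mul_self M
  obtain ⟨c, hc⟩ := exists_orthonormalBasis_mulVec_eigenvectorBasis M
  set Y : Matrix n n 𝕜 := ↑hH.eigenvectorUnitary
  set X := (EuclideanSpace.basisFun n 𝕜).toBasis.toMatrix c
  have hMY : M * Y = X * diagonal (fun i => ((√(hH.eigenvalues i) : ℝ) : 𝕜)) := by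
    ext i j
    have := congrFun (hc j) i
    rw [Pi.smul_apply, smul_eq_mul] at this
    rw [mul_diagonal, mul_comm]
    simp only [Module.Basis.toMatrix_apply, OrthonormalBasis.coe_toBasis_repr_apply,
      EuclideanSpace.basisFun_repr, X, ← this, mulVec, dotProduct, mul_apply, Y,
      IsHermitian.eigenvectorUnitary_apply]
  refine ⟨X, (EuclideanSpace.basisFun n 𝕜).toMatrix_orthonormalBasis_mem_unitary c, Y,
    hH.eigenvectorUnitary.2, ?_⟩
  calc M = M * (Y * star Y) := by rw [mem_unitaryGroup_iff.1 hH.eigenvectorUnitary.2, Matrix.mul_one]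
    _ = _ := by rw [← Matrix.mul_assoc, hMY, star_eq_conjTranspose]

end Matrix

open Matrix

namespace IsSingListDesc

variable {n : ℕ} {M : Matrix (Fin n) (Fin n) ℂ} {s : Fin n → ℝ}

theorem nonneg (hs : IsSingListDesc M s) (i : Fin n) : 0 ≤ s i := by
  obtain ⟨-, σ, rfl⟩ := hs
  exact Real.sqrt_nonneg _

theorem re_trace_le_prefixSum (hs : IsSingListDesc M s) {ι : Type*} [Fintype ι] [DecidableEq ι]
    {U V : Matrix (Fin n) ι ℂ} (hU : Uᴴ * U = 1) (hV : Vᴴ * V = 1) {k : ℕ}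
    (hk : Fintype.card ι ≤ k) : (trace (Uᴴ * M * V)).re ≤ prefixSum s k := by
  have hs₀ := hs.nonneg
  obtain ⟨hanti, σ, rfl⟩ := hs
  obtain ⟨X, hX, Y, hY, hM⟩ := exists_svd M
  obtain ⟨c, hc₀, hc₁, hc, hle⟩ := exists_re_trace_le_sum_mul (mem_unitaryGroup_iff.1 hX)
    (mem_unitaryGroup_iff.1 hY) (fun _ => Real.sqrt_nonneg _) hU hV
  rw [← hM] at hle
  calc (trace (Uᴴ * M * V)).re
      ≤ ∑ i, √((isHermitian_conjTranspose_mul_self M).eigenvalues i) * c i := hle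
    _ = ∑ j, √((isHermitian_conjTranspose_mul_self M).eigenvalues (σ j)) * c (σ j) :=
        (Equiv.sum_comp σ _).symm
    _ ≤ _ := sum_mul_le_prefixSum hanti hs₀ (fun _ => hc₀ _) (fun _ => hc₁ _)
        (by rw [Equiv.sum_comp σ c, hc]; exact_mod_cast hk)

theorem exists_re_trace_eq_prefixSum (hs : IsSingListDesc M s) (k : ℕ) :
    ∃ U V : Matrix (Fin n) {j : Fin n // (j : ℕ) < k} ℂ, Uᴴ * U = 1 ∧ Vᴴ * V = 1 ∧
      (trace (Uᴴ * M * V)).re = prefixSum s k := by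
  obtain ⟨-, σ, rfl⟩ := hs
  obtain ⟨X, hX, Y, hY, hM⟩ := exists_svd M
  set f : {j : Fin n // (j : ℕ) < k} → Fin n := σ ∘ Subtype.val
  have hf : Function.Injective f := σ.injective.comp Subtype.val_injective
  have hcols {W : Matrix (Fin n) (Fin n) ℂ} (hW : W ∈ unitaryGroup (Fin n) ℂ) :
      (W.submatrix id f)ᴴ * W.submatrix id f = 1 := by
    rw [conjTranspose_submatrix, ← submatrix_mul _ _ _ _ _ Function.bijective_id,
      ← star_eq_conjTranspose, mem_unitaryGroup_iff'.1 hW, submatrix_one _ hf]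
  refine ⟨X.submatrix id f, Y.submatrix id f, hcols hX, hcols hY, ?_⟩
  have : (X.submatrix id f)ᴴ * M * Y.submatrix id f = (Xᴴ * M * Y).submatrix f f := by
    rw [conjTranspose_submatrix, submatrix_mul _ _ f id f Function.bijective_id,
      submatrix_mul _ _ f id id Function.bijective_id, submatrix_id_id]
  have hXX : Xᴴ * X = 1 := by rw [← star_eq_conjTranspose, mem_unitaryGroup_iff'.1 hX]
  have hYY : Yᴴ * Y = 1 := by rw [← star_eq_conjTranspose, mem_unitaryGroup_iff'.1 hY]
  set d := fun i => ((√((isHermitian_conjTranspose_mul_self M).eigenvalues i) : ℝ) : ℂ)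
  have hdiag : Xᴴ * M * Y = diagonal d := by
    rw [hM]
    simp only [Matrix.mul_assoc, hYY, Matrix.mul_one]
    rw [← Matrix.mul_assoc, hXX, Matrix.one_mul]
    rfl
  rw [this, hdiag, submatrix_diagonal _ _ hf, trace_diagonal]
  rw [Complex.re_sum, prefixSum, sum_subtype _ (p := fun j : Fin n => (j : ℕ) < k)
    (F := inferInstance) (by simp)]
  exact sum_congr rfl fun j _ => Complex.ofReal_re _

theorem weakMajDesc_of_eq_half_add {A B W₁ W₂ W₃ W₄ : Matrix (Fin n) (Fin n) ℂ}
    (h₁ : W₁ * W₁ᴴ = 1) (h₂ : W₂ᴴ * W₂ = 1) (h₃ : W₃ * W₃ᴴ = 1) (h₄ : W₄ᴴ * W₄ = 1)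
    (hB : B = (2⁻¹ : ℂ) • (W₁ * A * W₂ + W₃ * A * W₄)) {sA sB : Fin n → ℝ}
    (hsA : IsSingListDesc A sA) (hsB : IsSingListDesc B sB) : WeakMajDesc sB sA := by
  refine fun t => (sum_le_prefixSum_card hsB.1 hsB.nonneg t).trans ?_
  show prefixSum sB #t ≤ prefixSum sA #t
  obtain ⟨U, V, hU, hV, hUV⟩ := hsB.exists_re_trace_eq_prefixSum #t
  have hcard : Fintype.card {j : Fin n // (j : ℕ) < #t} ≤ #t := by
    rw [Fintype.card_subtype, Fin.card_filter_val_lt]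
    exact min_le_right _ _
  have hbound {W W' : Matrix (Fin n) (Fin n) ℂ} (hW : W * Wᴴ = 1) (hW' : W'ᴴ * W' = 1) :
      (trace (Uᴴ * (W * A * W') * V)).re ≤ prefixSum sA #t := by
    have := hsA.re_trace_le_prefixSum
      (conjTranspose_mul_self_mul_eq_one (by rwa [conjTranspose_conjTranspose]) hU)
      (conjTranspose_mul_self_mul_eq_one hW' hV) hcard
    simpa only [conjTranspose_mul, conjTranspose_conjTranspose, Matrix.mul_assoc] using this
  have hsplit : (trace (Uᴴ * B * V)).re = 2⁻¹ * ((trace (Uᴴ * (W₁ * A * W₂) * V)).re +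
      (trace (Uᴴ * (W₃ * A * W₄) * V)).re) := by
    rw [hB, Matrix.mul_smul, Matrix.smul_mul, Matrix.mul_add, Matrix.add_mul, trace_smul,
      trace_add, smul_eq_mul, Complex.mul_re, Complex.add_re]
    norm_num
  rw [← hUV, hsplit]
  linarith [hbound h₁ h₂, hbound h₃ h₄]

end IsSingListDesc

/-- The pinching inequality: if `P` is an orthogonal projector, then
`S(PAP + (I−P)A(I−P)) ≺_w S(A)` and `S(PAP − (I−P)A(I−P)) ≺_w S(A)`. -/
theorem pinching_weakMaj {n : ℕ} (P A : Matrix (Fin n) (Fin n) ℂ)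
    (hP : P.conjTranspose = P) (hPP : P * P = P)
    (sA sPlus sMinus : Fin n → ℝ)
    (hsA : IsSingListDesc A sA)
    (hsPlus : IsSingListDesc (P * A * P + (1 - P) * A * (1 - P)) sPlus)
    (hsMinus : IsSingListDesc (P * A * P - (1 - P) * A * (1 - P)) sMinus) :
    WeakMajDesc sPlus sA ∧ WeakMajDesc sMinus sA := by
  set W := 2 • P - 1
  have hWH : Wᴴ = W := by rw [conjTranspose_sub, conjTranspose_nsmul, hP, conjTranspose_one]
  have hWW : W * W = 1 := by
    have : W * W = 1 + 4 • (P * P - P) := by simp only [W]; noncomm_ring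
    rw [this, hPP, sub_self, smul_zero, add_zero]
  have hW : W * Wᴴ = 1 := by rw [hWH, hWW]
  have hW' : Wᴴ * W = 1 := by rw [hWH, hWW]
  have hPlus : P * A * P + (1 - P) * A * (1 - P) = (2⁻¹ : ℂ) • (1 * A * 1 + W * A * W) := by
    rw [eq_inv_smul_iff₀ two_ne_zero, two_smul]
    simp only [W]
    noncomm_ring
  have hMinus : P * A * P - (1 - P) * A * (1 - P) = (2⁻¹ : ℂ) • (W * A * 1 + 1 * A * W) := by
    rw [eq_inv_smul_iff₀ two_ne_zero, two_smul]
    simp only [W]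
    noncomm_ring
  exact ⟨hsA.weakMajDesc_of_eq_half_add (by simp) (by simp) hW hW' hPlus hsPlus,
    hsA.weakMajDesc_of_eq_half_add hW (by simp) (by simp) hW' hMinus hsMinus⟩
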